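/- Let ρ be a density operator on the (n_O + n_B)-qubit space (ℂ²)^{⊗n_O} ⊗ (ℂ²)^{⊗n_B}, let σ_O and σ_B be density operators on (ℂ²)^{⊗n_O} and (ℂ²)^{⊗n_B} respectively, and let δ > 0. If |Tr((ρ − σ_O ⊗ σ_B)P)| ≤ δ for every (n_O + n_B)-qubit Pauli operator P, then ‖ρ − ρ_O ⊗ ρ_B‖₁ ≤ 3·2^{n_O + n_B}·δ, where ρ_O and ρ_B are the partial traces of ρ. -/

import Mathlib

open Matrix
open scoped Kronecker ComplexOrder

/-- The trace norm `‖A‖₁ = Tr √(AᴴA)` of a complex square matrix. -/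
noncomputable def traceNorm {n : Type*} [Fintype n] [DecidableEq n] (A : Matrix n n ℂ) : ℝ :=
  ((Matrix.posSemidef_conjTranspose_mul_self A).1.eigenvectorUnitary.1 *
    diagonal (Complex.ofReal ∘ (Real.sqrt ·) ∘ (Matrix.posSemidef_conjTranspose_mul_self A).1.eigenvalues) *
    (star (Matrix.posSemidef_conjTranspose_mul_self A).1.eigenvectorUnitary : Matrix n n ℂ)).trace.re

/-- A density operator: positive semidefinite with unit trace. -/
def IsDensity {n : Type*} [Fintype n] (ρ : Matrix n n ℂ) : Prop :=
  ρ.PosSemidef ∧ ρ.trace = 1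

/-- Partial trace over the second tensor factor. -/
noncomputable def ptraceSnd {a b : Type*} [Fintype b] (ρ : Matrix (a × b) (a × b) ℂ) :
    Matrix a a ℂ :=
  Matrix.of fun i i' => ∑ x, ρ (i, x) (i', x)

/-- Partial trace over the first tensor factor. -/
noncomputable def ptraceFst {a b : Type*} [Fintype a] (ρ : Matrix (a × b) (a × b) ℂ) :
    Matrix b b ℂ :=
  Matrix.of fun j j' => ∑ x, ρ (x, j) (x, j')

/-- The four single-qubit Pauli matrices `I, X, Y, Z`. -/
noncomputable def pauli1 : Fin 4 → Matrix (Fin 2) (Fin 2) ℂ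
  | 0 => 1
  | 1 => !![0, 1; 1, 0]
  | 2 => !![0, -Complex.I; Complex.I, 0]
  | 3 => !![1, 0; 0, -1]

/-- The `n`-qubit Pauli operator given by a word `f : Fin n → Fin 4`. -/
noncomputable def pauliN {n : ℕ} (f : Fin n → Fin 4) :
    Matrix (Fin n → Fin 2) (Fin n → Fin 2) ℂ :=
  Matrix.of fun x y => ∏ i, pauli1 (f i) (x i) (y i)

/-!
The `4^(nO+nB)` Pauli strings `P` satisfy `∑_P Tr(B P) P = 2^(nO+nB) B`, so for
`A = ρ - ρ_O ⊗ ρ_B` Parseval gives `2^(nO+nB) ‖A‖₂² = ∑_P |Tr(A P)|²`, while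
`‖A‖₁² ≤ 2^(nO+nB) ‖A‖₂²` by Cauchy–Schwarz applied to `√(AᴴA)`. It remains to bound each
coefficient by `3δ`. With `t = Tr(ρ (P ⊗ Q))`, `r_O = Tr(ρ_O P) = Tr(ρ (P ⊗ I))`,
`r_B = Tr(ρ (I ⊗ Q))`, `s_O = Tr(σ_O P)` and `s_B = Tr(σ_B Q)`,
`t - r_O r_B = (t - s_O s_B) - s_O (r_B - s_B) - (r_O - s_O) r_B`; each difference is a Pauli
expectation of `ρ - σ_O ⊗ σ_B`, and `|s_O|, |r_B| ≤ 1` because Pauli strings are Hermitian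
involutions.
-/

section TraceNorm

variable {m : Type*} [Fintype m]

lemma re_trace_sq_le_card_mul_re_trace_conjTranspose_mul_self (S : Matrix m m ℂ) :
    S.trace.re ^ 2 ≤ Fintype.card m * (Sᴴ * S).trace.re := by
  have hfrob : (Sᴴ * S).trace.re = ∑ i, ∑ j, Complex.normSq (S j i) := by
    simp [Matrix.trace, mul_apply, Complex.re_sum, Complex.normSq_apply]
  calc S.trace.re ^ 2 = (∑ i, (S i i).re) ^ 2 := by simp [Matrix.trace, Complex.re_sum]
    _ ≤ Fintype.card m * ∑ i, (S i i).re ^ 2 := by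
      simpa using sq_sum_le_card_mul_sum_sq (s := Finset.univ) (f := fun i => (S i i).re)
    _ ≤ Fintype.card m * (Sᴴ * S).trace.re := by
      rw [hfrob]
      gcongr with i
      calc (S i i).re ^ 2 ≤ Complex.normSq (S i i) := by
            rw [sq]; exact Complex.re_sq_le_normSq _
        _ ≤ ∑ j, Complex.normSq (S j i) :=
          Finset.single_le_sum (fun j _ => Complex.normSq_nonneg (S j i)) (Finset.mem_univ i)

variable [DecidableEq m]

open scoped MatrixOrder in
lemma traceNorm_eq_re_trace_sqrt (A : Matrix m m ℂ) :
    traceNorm A = (CFC.sqrt (Aᴴ * A)).trace.re := by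
  rw [CFC.sqrt_eq_real_sqrt _ (posSemidef_conjTranspose_mul_self A).nonneg, cfcₙ_eq_cfc,
    (posSemidef_conjTranspose_mul_self A).1.cfc_eq]
  rfl

open scoped MatrixOrder in
lemma traceNorm_sq_le_card_mul (A : Matrix m m ℂ) :
    traceNorm A ^ 2 ≤ Fintype.card m * (Aᴴ * A).trace.re := by
  have hS : (CFC.sqrt (Aᴴ * A)).IsHermitian :=
    (CFC.sqrt_nonneg (Aᴴ * A)).posSemidef.isHermitian
  rw [traceNorm_eq_re_trace_sqrt]
  convert re_trace_sq_le_card_mul_re_trace_conjTranspose_mul_self (CFC.sqrt (Aᴴ * A)) using 4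
  rw [hS.eq, CFC.sqrt_mul_sqrt_self _ (posSemidef_conjTranspose_mul_self A).nonneg]

end TraceNorm

section Density

variable {m : Type*} [Fintype m] [DecidableEq m]

open scoped MatrixOrder in
lemma Matrix.PosSemidef.trace_mul_nonneg {σ M : Matrix m m ℂ} (hσ : σ.PosSemidef)
    (hM : M.PosSemidef) : 0 ≤ (σ * M).trace := by
  set R := CFC.sqrt σ
  have hR : R.IsHermitian := (CFC.sqrt_nonneg σ).posSemidef.isHermitian
  have hcycle : (σ * M).trace = (Rᴴ * M * R).trace := by
    rw [hR.eq, ← CFC.sqrt_mul_sqrt_self σ hσ.nonneg, mul_assoc, trace_mul_comm, mul_assoc]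
  rw [hcycle]
  exact (hM.conjTranspose_mul_mul_same R).trace_nonneg

lemma IsDensity.norm_trace_mul_le_one {σ P : Matrix m m ℂ} (hσ : IsDensity σ)
    (hP : P.IsHermitian) (hP2 : P * P = 1) : ‖(σ * P).trace‖ ≤ 1 := by
  have hreal : (σ * P).trace.im = 0 := by
    have hstar : star (σ * P).trace = (σ * P).trace := by
      rw [← trace_conjTranspose, conjTranspose_mul, hP.eq, hσ.1.1.eq, trace_mul_comm]
    have := congrArg Complex.im hstar
    simp only [Complex.star_def, Complex.conj_im] at this
    linarith
  have one_add_re_nonneg : ∀ Q : Matrix m m ℂ, Q.IsHermitian → Q * Q = 1 →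
      0 ≤ 1 + (σ * Q).trace.re := by
    intro Q hQ hQ2
    have hsq : (1 + Q)ᴴ * (1 + Q) = (2 : ℂ) • (1 + Q) := by
      simp only [conjTranspose_add, conjTranspose_one, hQ.eq, add_mul, mul_add, hQ2, one_mul,
        mul_one, two_smul]
      abel
    have := (Complex.le_def.mp
      (hσ.1.trace_mul_nonneg (posSemidef_conjTranspose_mul_self (1 + Q)))).1
    rw [hsq, Matrix.mul_smul, mul_add, mul_one, trace_smul, trace_add, hσ.2] at this
    simpa using this
  have hplus := one_add_re_nonneg P hP hP2
  have hminus := one_add_re_nonneg (-P) hP.neg (by rw [neg_mul_neg, hP2])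
  rw [mul_neg, trace_neg, Complex.neg_re] at hminus
  rw [← Complex.abs_re_eq_norm.mpr hreal, abs_le]
  constructor <;> linarith

end Density

section Kronecker

variable {a b : Type*}

lemma Matrix.IsHermitian.kronecker {P : Matrix a a ℂ} {Q : Matrix b b ℂ} (hP : P.IsHermitian)
    (hQ : Q.IsHermitian) : (P ⊗ₖ Q).IsHermitian := by
  rw [IsHermitian, conjTranspose_kronecker, hP.eq, hQ.eq]

variable [Fintype a] [Fintype b]

lemma trace_kronecker_mul_kronecker (X P : Matrix a a ℂ) (Y Q : Matrix b b ℂ) :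
    ((X ⊗ₖ Y) * (P ⊗ₖ Q)).trace = (X * P).trace * (Y * Q).trace := by
  rw [← mul_kronecker_mul, trace_kronecker]

lemma trace_ptraceSnd_mul [DecidableEq b] (ρ : Matrix (a × b) (a × b) ℂ) (M : Matrix a a ℂ) :
    (ptraceSnd ρ * M).trace = (ρ * (M ⊗ₖ (1 : Matrix b b ℂ))).trace := by
  simp only [Matrix.trace, diag, mul_apply, ptraceSnd, of_apply, Fintype.sum_prod_type,
    kroneckerMap_apply, one_apply, mul_ite, mul_one, mul_zero, Finset.sum_ite_eq',
    Finset.mem_univ, if_true, Finset.sum_mul]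
  exact Finset.sum_congr rfl fun _ _ => Finset.sum_comm

lemma trace_ptraceFst_mul [DecidableEq a] (ρ : Matrix (a × b) (a × b) ℂ) (M : Matrix b b ℂ) :
    (ptraceFst ρ * M).trace = (ρ * ((1 : Matrix a a ℂ) ⊗ₖ M)).trace := by
  simp only [Matrix.trace, diag, mul_apply, ptraceFst, of_apply, Fintype.sum_prod_type,
    kroneckerMap_apply, one_apply, ite_mul, one_mul, zero_mul, mul_ite, mul_zero,
    Finset.sum_ite_irrel, Finset.sum_const_zero, Finset.sum_ite_eq', Finset.mem_univ, if_true,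
    Finset.sum_mul]
  exact (Finset.sum_congr rfl fun _ _ => Finset.sum_comm).trans Finset.sum_comm

end Kronecker

section PiKronecker

variable {ι α R : Type*} [Fintype ι] [CommSemiring R]

def piKronecker (M : ι → Matrix α α R) : Matrix (ι → α) (ι → α) R :=
  of fun x y => ∏ i, M i (x i) (y i)

lemma piKronecker_mul [Fintype α] [DecidableEq ι] (M N : ι → Matrix α α R) :
    piKronecker M * piKronecker N = piKronecker fun i => M i * N i := by
  ext x y
  simp only [piKronecker, mul_apply, of_apply, Finset.prod_univ_sum, Fintype.piFinset_univ,
    Finset.prod_mul_distrib]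

lemma piKronecker_one [DecidableEq α] :
    piKronecker (fun _ : ι => (1 : Matrix α α R)) = 1 := by
  ext x y
  by_cases hxy : x = y
  · subst hxy
    simp [piKronecker]
  · obtain ⟨i, hi⟩ := Function.ne_iff.mp hxy
    rw [one_apply_ne hxy]
    exact Finset.prod_eq_zero (Finset.mem_univ i) (one_apply_ne hi)

lemma conjTranspose_piKronecker [StarRing R] (M : ι → Matrix α α R) :
    (piKronecker M)ᴴ = piKronecker fun i => (M i)ᴴ := by
  ext x y
  simp [piKronecker, conjTranspose_apply, star_prod]

end PiKronecker

section Completeness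

variable {ι κ m n : Type*} [Fintype ι] [Fintype κ] [DecidableEq m] [DecidableEq n]

def HasCompletenessRelation (P : ι → Matrix m m ℂ) (N : ℕ) : Prop :=
  ∀ a b c d, ∑ i, P i a b * P i c d = if a = d ∧ b = c then (N : ℂ) else 0

namespace HasCompletenessRelation

lemma kronecker {P : ι → Matrix m m ℂ} {Q : κ → Matrix n n ℂ} {N M : ℕ}
    (hP : HasCompletenessRelation P N) (hQ : HasCompletenessRelation Q M) :
    HasCompletenessRelation (fun ij : ι × κ => P ij.1 ⊗ₖ Q ij.2) (N * M) := by
  rintro ⟨a₁, a₂⟩ ⟨b₁, b₂⟩ ⟨c₁, c₂⟩ ⟨d₁, d₂⟩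
  calc ∑ ij : ι × κ, (P ij.1 ⊗ₖ Q ij.2) (a₁, a₂) (b₁, b₂) * (P ij.1 ⊗ₖ Q ij.2) (c₁, c₂) (d₁, d₂)
      = (∑ i, P i a₁ b₁ * P i c₁ d₁) * ∑ j, Q j a₂ b₂ * Q j c₂ d₂ := by
        rw [Fintype.sum_prod_type, Finset.sum_mul_sum]
        simp only [kroneckerMap_apply]
        exact Finset.sum_congr rfl fun _ _ => Finset.sum_congr rfl fun _ _ => by ring
    _ = _ := by
        rw [hP, hQ]
        simp only [Prod.mk.injEq, Nat.cast_mul]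
        split_ifs <;> simp_all

lemma piKronecker [Fintype m] [DecidableEq ι] {P : κ → Matrix m m ℂ} {N : ℕ}
    (hP : HasCompletenessRelation P N) :
    HasCompletenessRelation (fun f : ι → κ => _root_.piKronecker fun i => P (f i))
      (N ^ Fintype.card ι) := by
  intro a b c d
  calc ∑ f : ι → κ, _root_.piKronecker (fun i => P (f i)) a b *
        _root_.piKronecker (fun i => P (f i)) c d
      = ∏ i, ∑ k, P k (a i) (b i) * P k (c i) (d i) := by
        rw [Finset.prod_univ_sum, Fintype.piFinset_univ]
        simp only [_root_.piKronecker, of_apply, Finset.prod_mul_distrib]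
    _ = ∏ i, if a i = d i ∧ b i = c i then (N : ℂ) else 0 :=
        Finset.prod_congr rfl fun i _ => hP _ _ _ _
    _ = _ := by
        by_cases h : a = d ∧ b = c
        · simp [h]
        · obtain ⟨i, hi⟩ : ∃ i, ¬(a i = d i ∧ b i = c i) := by
            contrapose! h
            exact ⟨funext fun i => (h i).1, funext fun i => (h i).2⟩
          rw [if_neg h]
          exact Finset.prod_eq_zero (Finset.mem_univ i) (if_neg hi)

lemma sum_trace_mul_smul [Fintype m] {P : ι → Matrix m m ℂ} {N : ℕ}
    (hP : HasCompletenessRelation P N) (B : Matrix m m ℂ) :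
    ∑ i, (B * P i).trace • P i = (N : ℂ) • B := by
  ext y x
  calc (∑ i, (B * P i).trace • P i) y x
      = ∑ z, ∑ w, B z w * ∑ i, P i w z * P i y x := by
        simp only [Matrix.sum_apply, Matrix.smul_apply, Matrix.trace, diag, mul_apply, smul_eq_mul,
          Finset.sum_mul, Finset.mul_sum, mul_assoc]
        rw [Finset.sum_comm]
        exact Finset.sum_congr rfl fun _ _ => Finset.sum_comm
    _ = ((N : ℂ) • B) y x := by
        simp [hP _ _ _ _, ite_and, Finset.sum_ite_eq, mul_comm]

lemma sum_trace_mul_mul_trace_mul [Fintype m] {P : ι → Matrix m m ℂ} {N : ℕ}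
    (hP : HasCompletenessRelation P N) (A B : Matrix m m ℂ) :
    ∑ i, (A * P i).trace * (B * P i).trace = N * (A * B).trace := by
  calc ∑ i, (A * P i).trace * (B * P i).trace = (A * ∑ i, (B * P i).trace • P i).trace := by
        simp [Matrix.mul_sum, trace_sum, mul_comm]
    _ = N * (A * B).trace := by
        rw [hP.sum_trace_mul_smul, Matrix.mul_smul, trace_smul, smul_eq_mul]

lemma sum_norm_sq_trace_mul [Fintype m] {P : ι → Matrix m m ℂ} {N : ℕ}
    (hP : HasCompletenessRelation P N) (hherm : ∀ i, (P i).IsHermitian) (A : Matrix m m ℂ) :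
    ∑ i, ‖(A * P i).trace‖ ^ 2 = N * (Aᴴ * A).trace.re := by
  have hconj : ∀ i, (Aᴴ * P i).trace = star (A * P i).trace := fun i => by
    rw [← trace_conjTranspose, conjTranspose_mul, (hherm i).eq, trace_mul_comm]
  have := congrArg Complex.re (hP.sum_trace_mul_mul_trace_mul Aᴴ A)
  simpa only [hconj, Complex.star_def, Complex.conj_mul', Complex.re_sum, ← Complex.ofReal_pow,
    Complex.ofReal_re, Complex.mul_re, Complex.natCast_re, Complex.natCast_im, zero_mul,
    sub_zero] using this

lemma traceNorm_sq_le [Fintype m] {P : ι → Matrix m m ℂ}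
    (hP : HasCompletenessRelation P (Fintype.card m)) (hherm : ∀ i, (P i).IsHermitian)
    {A : Matrix m m ℂ} {ε : ℝ} (hA : ∀ i, ‖(A * P i).trace‖ ≤ ε) :
    traceNorm A ^ 2 ≤ Fintype.card ι * ε ^ 2 :=
  calc traceNorm A ^ 2 ≤ Fintype.card m * (Aᴴ * A).trace.re := traceNorm_sq_le_card_mul A
    _ = ∑ i, ‖(A * P i).trace‖ ^ 2 := (hP.sum_norm_sq_trace_mul hherm A).symm
    _ ≤ ∑ _i : ι, ε ^ 2 := by
      gcongr with i
      exact hA i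
    _ = Fintype.card ι * ε ^ 2 := by simp

end HasCompletenessRelation

end Completeness

section Pauli

lemma pauli1_isHermitian (k : Fin 4) : (pauli1 k).IsHermitian := by
  ext a b
  fin_cases k <;> fin_cases a <;> fin_cases b <;> simp [pauli1]

lemma pauli1_mul_self (k : Fin 4) : pauli1 k * pauli1 k = 1 := by
  ext a b
  fin_cases k <;> fin_cases a <;> fin_cases b <;> simp [pauli1, mul_apply, Fin.sum_univ_two]

lemma hasCompletenessRelation_pauli1 : HasCompletenessRelation pauli1 2 := by
  intro a b c d
  fin_cases a <;> fin_cases b <;> fin_cases c <;> fin_cases d <;>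
    norm_num [pauli1, Fin.sum_univ_four]

variable {n : ℕ}

lemma pauliN_eq_piKronecker (f : Fin n → Fin 4) :
    pauliN f = piKronecker fun i => pauli1 (f i) := rfl

lemma pauliN_isHermitian (f : Fin n → Fin 4) : (pauliN f).IsHermitian := by
  simp only [IsHermitian, pauliN_eq_piKronecker, conjTranspose_piKronecker,
    (pauli1_isHermitian _).eq]

lemma pauliN_mul_self (f : Fin n → Fin 4) : pauliN f * pauliN f = 1 := by
  simp only [pauliN_eq_piKronecker, piKronecker_mul, pauli1_mul_self, piKronecker_one]

lemma pauliN_zero : pauliN (0 : Fin n → Fin 4) = 1 := piKronecker_one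

lemma hasCompletenessRelation_pauliN :
    HasCompletenessRelation (pauliN (n := n)) (2 ^ n) := by
  have h := hasCompletenessRelation_pauli1.piKronecker (ι := Fin n)
  rwa [Fintype.card_fin] at h

end Pauli

lemma norm_sub_mul_le_three_mul {R : Type*} [SeminormedRing R] {t r₁ r₂ s₁ s₂ : R} {δ : ℝ}
    (ht : ‖t - s₁ * s₂‖ ≤ δ) (h₁ : ‖r₁ - s₁‖ ≤ δ) (h₂ : ‖r₂ - s₂‖ ≤ δ)
    (hs₁ : ‖s₁‖ ≤ 1) (hr₂ : ‖r₂‖ ≤ 1) : ‖t - r₁ * r₂‖ ≤ 3 * δ := by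
  have hδ : 0 ≤ δ := (norm_nonneg _).trans ht
  calc ‖t - r₁ * r₂‖ = ‖(t - s₁ * s₂) - s₁ * (r₂ - s₂) - (r₁ - s₁) * r₂‖ := by
        congr 1; noncomm_ring
    _ ≤ ‖t - s₁ * s₂‖ + ‖s₁‖ * ‖r₂ - s₂‖ + ‖r₁ - s₁‖ * ‖r₂‖ := by
        refine (norm_sub_le_of_le (norm_sub_le _ _) (norm_mul_le _ _)).trans ?_
        gcongr
        exact norm_mul_le _ _
    _ ≤ δ + 1 * δ + δ * 1 := by gcongr
    _ = 3 * δ := by ring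

variable {a b : Type*} [Fintype a] [Fintype b] [DecidableEq a] [DecidableEq b] in
lemma norm_trace_mul_kronecker_sub_marginals_le {ρ : Matrix (a × b) (a × b) ℂ}
    {σO : Matrix a a ℂ} {σB : Matrix b b ℂ} {P : Matrix a a ℂ} {Q : Matrix b b ℂ} {δ : ℝ}
    (hρ : IsDensity ρ) (hσO : IsDensity σO) (hσB : σB.trace = 1)
    (hP : P.IsHermitian) (hP2 : P * P = 1) (hQ : Q.IsHermitian) (hQ2 : Q * Q = 1)
    (hPQ : ‖((ρ - σO ⊗ₖ σB) * (P ⊗ₖ Q)).trace‖ ≤ δ)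
    (hP1 : ‖((ρ - σO ⊗ₖ σB) * (P ⊗ₖ 1)).trace‖ ≤ δ)
    (h1Q : ‖((ρ - σO ⊗ₖ σB) * (1 ⊗ₖ Q)).trace‖ ≤ δ) :
    ‖((ρ - ptraceSnd ρ ⊗ₖ ptraceFst ρ) * (P ⊗ₖ Q)).trace‖ ≤ 3 * δ := by
  simp only [Matrix.sub_mul, trace_sub, trace_kronecker_mul_kronecker, mul_one, one_mul,
    hσB, hσO.2] at hPQ hP1 h1Q ⊢
  rw [← trace_ptraceSnd_mul] at hP1
  rw [← trace_ptraceFst_mul] at h1Q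
  refine norm_sub_mul_le_three_mul hPQ hP1 h1Q (hσO.norm_trace_mul_le_one hP hP2) ?_
  rw [trace_ptraceFst_mul]
  exact hρ.norm_trace_mul_le_one (isHermitian_one.kronecker hQ)
    (by rw [← mul_kronecker_mul, one_mul, hQ2, one_kronecker_one])

theorem decoupling_bound_general
    (nO nB : ℕ)
    (ρ : Matrix ((Fin nO → Fin 2) × (Fin nB → Fin 2))
                ((Fin nO → Fin 2) × (Fin nB → Fin 2)) ℂ)
    (σO : Matrix (Fin nO → Fin 2) (Fin nO → Fin 2) ℂ)
    (σB : Matrix (Fin nB → Fin 2) (Fin nB → Fin 2) ℂ)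
    (hρ : IsDensity ρ) (hσO : IsDensity σO) (hσB : IsDensity σB)
    (δ : ℝ)
    (h : ∀ (fO : Fin nO → Fin 4) (fB : Fin nB → Fin 4),
      ‖((ρ - σO ⊗ₖ σB) * (pauliN fO ⊗ₖ pauliN fB)).trace‖ ≤ δ) :
    traceNorm (ρ - (ptraceSnd ρ) ⊗ₖ (ptraceFst ρ)) ≤ 3 * 2 ^ (nO + nB) * δ := by
  have hδ : 0 ≤ δ := (norm_nonneg _).trans (h 0 0)
  have hcoeff : ∀ f : (Fin nO → Fin 4) × (Fin nB → Fin 4),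
      ‖((ρ - ptraceSnd ρ ⊗ₖ ptraceFst ρ) * (pauliN f.1 ⊗ₖ pauliN f.2)).trace‖ ≤ 3 * δ :=
    fun f => norm_trace_mul_kronecker_sub_marginals_le hρ hσO hσB.2
      (pauliN_isHermitian f.1) (pauliN_mul_self f.1) (pauliN_isHermitian f.2)
      (pauliN_mul_self f.2) (h f.1 f.2) (by simpa [pauliN_zero] using h f.1 0)
      (by simpa [pauliN_zero] using h 0 f.2)
  have hbasis : HasCompletenessRelation (fun f : (Fin nO → Fin 4) × (Fin nB → Fin 4) =>
      pauliN f.1 ⊗ₖ pauliN f.2) (Fintype.card ((Fin nO → Fin 2) × (Fin nB → Fin 2))) := by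
    simpa using hasCompletenessRelation_pauliN.kronecker hasCompletenessRelation_pauliN
  have hherm (f : (Fin nO → Fin 4) × (Fin nB → Fin 4)) :=
    (pauliN_isHermitian f.1).kronecker (pauliN_isHermitian f.2)
  have hcard : (Fintype.card ((Fin nO → Fin 4) × (Fin nB → Fin 4)) : ℝ) * (3 * δ) ^ 2
      = (3 * 2 ^ (nO + nB) * δ) ^ 2 := by
    simp only [Fintype.card_prod, Fintype.card_fun, Fintype.card_fin, Nat.cast_mul, Nat.cast_pow]
    rw [show ((4 : ℕ) : ℝ) = 2 ^ 2 by norm_num, ← pow_mul, ← pow_mul]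
    ring
  calc _ ≤ |traceNorm (ρ - ptraceSnd ρ ⊗ₖ ptraceFst ρ)| := le_abs_self _
    _ ≤ 3 * 2 ^ (nO + nB) * δ :=
      abs_le_of_sq_le_sq ((hbasis.traceNorm_sq_le hherm hcoeff).trans_eq hcard) (by positivity)

/-- **Decoupling bound.** If no `(n_O + n_B)`-qubit Pauli observable can distinguish the
state `ρ` of `OB` from a product state `σ_O ⊗ σ_B` with bias better than `δ`, then the
two marginals of `ρ` are nearly uncorrelated:
`‖ρ − ρ_O ⊗ ρ_B‖₁ ≤ 3·2^{n_O+n_B}·δ`. -/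
theorem decoupling_bound
    (nO nB : ℕ)
    (ρ : Matrix ((Fin nO → Fin 2) × (Fin nB → Fin 2))
                ((Fin nO → Fin 2) × (Fin nB → Fin 2)) ℂ)
    (σO : Matrix (Fin nO → Fin 2) (Fin nO → Fin 2) ℂ)
    (σB : Matrix (Fin nB → Fin 2) (Fin nB → Fin 2) ℂ)
    (hρ : IsDensity ρ) (hσO : IsDensity σO) (hσB : IsDensity σB)
    (δ : ℝ) (hδ : 0 < δ)
    (h : ∀ (fO : Fin nO → Fin 4) (fB : Fin nB → Fin 4),
      ‖((ρ - σO ⊗ₖ σB) * (pauliN fO ⊗ₖ pauliN fB)).trace‖ ≤ δ) :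
    traceNorm (ρ - (ptraceSnd ρ) ⊗ₖ (ptraceFst ρ)) ≤ 3 * 2 ^ (nO + nB) * δ :=
  decoupling_bound_general nO nB ρ σO σB hρ hσO hσB δ h
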